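/- arXiv:2512.06741 — 2 statements merged into one kernel-verified Lean document; each statement's English description precedes it below -/
import Mathlib

section
/- A nonnegative integer sequence ε = (ε_1, ε_2, …) is β-admissible if and only if for every k ≥ 1 the shifted sequence (ε_k, ε_{k+1}, …) is lexicographically strictly smaller than ε*(1,β), the quasi-greedy expansion of 1 in base β. -/
open Filter MeasureTheory Set

noncomputable def Tb (β : ℝ) (x : ℝ) : ℝ := Int.fract (β * x)

/-- `dig β x n` is the (n+1)-st digit `ε_{n+1}(x)` of the β-expansion of `x`. -/
noncomputable def dig (β : ℝ) (x : ℝ) (n : ℕ) : ℤ := ⌊β * (Tb β)^[n] x⌋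

/-- `conv β x n` is the n-th convergent `ω_n(x)` of the β-expansion of `x`. -/
noncomputable def conv (β : ℝ) (x : ℝ) (n : ℕ) : ℝ :=
  ∑ k ∈ Finset.range n, (dig β x k : ℝ) / β ^ (k + 1)

/-- The n-th order cylinder determined by the word `w`. -/
def cyl (β : ℝ) {n : ℕ} (w : Fin n → ℤ) : Set ℝ :=
  {x ∈ Set.Ico (0:ℝ) 1 | ∀ k : Fin n, dig β x k = w k}

/-- A finite word is β-admissible if it is the beginning of the β-expansion of some x ∈ [0,1]. -/
def admissible (β : ℝ) {n : ℕ} (w : Fin n → ℤ) : Prop :=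
  ∃ x ∈ Set.Icc (0:ℝ) 1, ∀ k : Fin n, dig β x k = w k

/-- The β-expansion of 1 is finite with last non-zero digit at index m (0-indexed). -/
def finiteExpOne (β : ℝ) : Prop := ∃ m : ℕ, dig β 1 m ≠ 0 ∧ ∀ k, m < k → dig β 1 k = 0

open scoped Classical in
/-- The quasi-greedy expansion `ε*(1,β)` of 1 (0-indexed): equal to the β-expansion of 1
if that is infinite, and to its periodic modification otherwise. -/
noncomputable def epsStar (β : ℝ) : ℕ → ℤ :=
  if h : finiteExpOne β then
    fun n =>
      if n % (Classical.choose h + 1) = Classical.choose h then dig β 1 (Classical.choose h) - 1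
      else dig β 1 (n % (Classical.choose h + 1))
  else dig β 1

/-- Strict lexicographic order on integer sequences. -/
def lexLt (a b : ℕ → ℤ) : Prop := ∃ k, (∀ j < k, a j = b j) ∧ a k < b k

/-- An infinite sequence is β-admissible if it is the β-expansion of some x ∈ [0,1). -/
def seqAdmissible (β : ℝ) (ε : ℕ → ℤ) : Prop :=
  ∃ x ∈ Set.Ico (0:ℝ) 1, ∀ n, dig β x n = ε n

/-- `zrun β` = ℓ(1,β), the longest run of zeros immediately after the first digit of
`ε*(1,β)` (which occupies index 0). -/
noncomputable def zrun (β : ℝ) : ℕ :=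
  sSup {i : ℕ | ∀ j : ℕ, 1 ≤ j → j ≤ i → epsStar β j = 0}

section
variable {β : ℝ}

lemma dig_shift (x : ℝ) (k n : ℕ) : dig β x (k + n) = dig β ((Tb β)^[k] x) n := by
  rw [dig, dig, Nat.add_comm, Function.iterate_add_apply]

lemma step (x : ℝ) (n : ℕ) :
    β * (Tb β)^[n] x = (dig β x n : ℝ) + (Tb β)^[n+1] x := by
  rw [Function.iterate_succ_apply', dig, Tb]
  exact (Int.floor_add_fract (β * (Tb β)^[n] x)).symm

lemma partial_sum (hβ : 1 < β) (x : ℝ) (n : ℕ) :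
    x = (∑ k ∈ Finset.range n, (dig β x k : ℝ) / β ^ (k+1)) + (Tb β)^[n] x / β ^ n := by
  have hb0 : (0:ℝ) < β := by linarith
  induction n with
  | zero => simp
  | succ n ih =>
    rw [Finset.sum_range_succ]
    have e1 : (Tb β)^[n] x / β ^ n = (β * (Tb β)^[n] x) / β ^ (n+1) := by
      rw [pow_succ]
      field_simp
    rw [e1, step x n, add_div] at ih
    linarith [ih]
end

section
variable {β : ℝ}

lemma iter_nonneg' {x : ℝ} (hx : 0 ≤ x) (n : ℕ) : 0 ≤ (Tb β)^[n] x := by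
  cases n with
  | zero => exact hx
  | succ n => rw [Function.iterate_succ_apply']; exact Int.fract_nonneg _

lemma iter_le_one' {x : ℝ} (hx : x ≤ 1) (n : ℕ) : (Tb β)^[n] x ≤ 1 := by
  cases n with
  | zero => exact hx
  | succ n => rw [Function.iterate_succ_apply']; exact le_of_lt (Int.fract_lt_one _)

lemma dig_nonneg (hβ : 1 < β) {x : ℝ} (hx : 0 ≤ x) (n : ℕ) : 0 ≤ dig β x n :=
  Int.floor_nonneg.mpr (mul_nonneg (by linarith) (iter_nonneg' hx n))

lemma dig_le_floor (hβ : 1 < β) {x : ℝ} (hx0 : 0 ≤ x) (hx : x ≤ 1) (n : ℕ) :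
    dig β x n ≤ ⌊β⌋ := by
  apply Int.floor_le_floor
  nlinarith [iter_le_one' (β := β) hx n, iter_nonneg' (β := β) hx0 n]

lemma hasSum_dig (hβ : 1 < β) {x : ℝ} (hx : 0 ≤ x) (hx1 : x ≤ 1) :
    HasSum (fun k => (dig β x k : ℝ) / β ^ (k+1)) x := by
  have hb0 : (0:ℝ) < β := by linarith
  have hnn : ∀ k, 0 ≤ (dig β x k : ℝ) / β ^ (k+1) := by
    intro k
    have : (0:ℤ) ≤ dig β x k := Int.floor_nonneg.mpr (mul_nonneg hb0.le (iter_nonneg' hx k))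
    positivity
  rw [hasSum_iff_tendsto_nat_of_nonneg hnn]
  have h0 : Tendsto (fun n => (Tb β)^[n] x / β ^ n) atTop (nhds 0) := by
    have hg : Tendsto (fun n : ℕ => (1/β)^n) atTop (nhds 0) :=
      tendsto_pow_atTop_nhds_zero_of_lt_one (by positivity) (by rw [div_lt_one hb0]; linarith)
    refine squeeze_zero (fun n => div_nonneg (iter_nonneg' hx n) (pow_pos hb0 n).le)
      (fun n => ?_) hg
    rw [div_pow, one_pow]
    gcongr
    exact iter_le_one' hx1 n
  have hx0 : Tendsto (fun n : ℕ => x - (Tb β)^[n] x / β ^ n) atTop (nhds (x - 0)) :=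
    Tendsto.sub tendsto_const_nhds h0
  rw [sub_zero] at hx0
  exact hx0.congr (fun n => by linarith [partial_sum hβ x n])
end

noncomputable def vv (β : ℝ) (a : ℕ → ℤ) : ℝ := ∑' j, (a j : ℝ) / β ^ (j+1)

section
variable {β : ℝ} {a : ℕ → ℤ} {C : ℤ}

lemma summable_aux (hβ : 1 < β) (h0 : ∀ j, 0 ≤ a j) (hC : ∀ j, a j ≤ C) :
    Summable (fun j => (a j : ℝ) / β ^ (j+1)) := by
  have hb0 : (0:ℝ) < β := by linarith
  have hr0 : (0:ℝ) ≤ 1/β := by positivity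
  have hr1 : (1:ℝ)/β < 1 := by rw [div_lt_one hb0]; exact hβ
  have hg : Summable (fun j : ℕ => ((C:ℝ) * (1/β)) * (1/β)^j) :=
    (summable_geometric_of_lt_one hr0 hr1).mul_left _
  apply Summable.of_nonneg_of_le (fun j => ?_) (fun j => ?_) hg
  · have := h0 j
    positivity
  · have h1 : (a j : ℝ) ≤ (C:ℝ) := by exact_mod_cast hC j
    have h2 : ((C:ℝ) * (1/β)) * (1/β)^j = (C:ℝ) / β^(j+1) := by
      rw [pow_succ]; ring
    rw [h2]
    gcongr

lemma vv_nonneg (h0 : ∀ j, 0 ≤ a j) (hb0 : 0 < β) : 0 ≤ vv β a := by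
  apply tsum_nonneg
  intro j
  have := h0 j
  positivity

lemma vv_step (hβ : 1 < β) (h0 : ∀ j, 0 ≤ a j) (hC : ∀ j, a j ≤ C) :
    vv β a = (a 0 : ℝ)/β + vv β (fun j => a (j+1)) / β := by
  have hb0 : (0:ℝ) < β := by linarith
  have hs : Summable (fun j => (a j : ℝ) / β ^ (j+1)) := summable_aux hβ h0 hC
  rw [vv, Summable.tsum_eq_zero_add hs]
  have : ∀ j : ℕ, (a (j+1) : ℝ) / β ^ (j+1+1) = (1/β) * ((a (j+1) : ℝ) / β ^ (j+1)) := by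
    intro j; rw [pow_succ _ (j+1)]; ring
  simp only [this]
  rw [tsum_mul_left, vv, pow_one]
  ring
end

section
variable {β : ℝ} {a : ℕ → ℤ} {C : ℤ}

lemma vv_split (hβ : 1 < β) (h0 : ∀ j, 0 ≤ a j) (hC : ∀ j, a j ≤ C) (k n : ℕ) :
    vv β (fun j => a (k+j)) =
      (∑ j ∈ Finset.range n, (a (k+j) : ℝ) / β ^ (j+1)) +
        vv β (fun j => a (k+n+j)) / β ^ n := by
  have hb0 : (0:ℝ) < β := by linarith
  induction n with
  | zero => simp
  | succ n ih =>
    have hstep := vv_step (a := fun j => a (k+n+j)) hβ (fun j => h0 _) (fun j => hC _)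
    have heq : (fun j => a (k+n+(j+1))) = fun j => a (k+(n+1)+j) := by
      funext j; congr 1; omega
    simp only [heq] at hstep
    rw [Finset.sum_range_succ, ih, hstep]
    have hadd : k + n + 0 = k + n := by omega
    rw [hadd, add_div, pow_succ]
    have hβn : β ^ n ≠ 0 := (pow_pos hb0 n).ne'
    field_simp
    ring
end

section
variable {β : ℝ}

lemma Tb_zero : Tb β 0 = 0 := by simp [Tb]

lemma dig_one_zero (hβ : 1 < β) : (1:ℤ) ≤ dig β 1 0 := by
  rw [dig]
  simp only [Function.iterate_zero, id_eq, mul_one]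
  exact Int.le_floor.mpr (by exact_mod_cast hβ.le)

lemma tail_zero {k : ℕ} (hk : (Tb β)^[k] 1 = 0) :
    ∀ j, k ≤ j → (Tb β)^[j] (1:ℝ) = 0 := by
  intro j hj
  obtain ⟨i, rfl⟩ := Nat.exists_eq_add_of_le hj
  clear hj
  induction i with
  | zero => simpa using hk
  | succ i ih =>
    have h2 : k + (i+1) = (k+i) + 1 := by omega
    rw [h2, Function.iterate_succ_apply', ih, Tb_zero]

open scoped Classical in
lemma fin_of_zero (hβ : 1 < β) {k : ℕ} (hk : (Tb β)^[k] 1 = 0) : finiteExpOne β := by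
  have hdig : ∀ j, k ≤ j → dig β 1 j = 0 := by
    intro j hj
    rw [dig, tail_zero hk j hj]
    simp
  have hP0 : dig β 1 0 ≠ 0 := by have := dig_one_zero hβ; omega
  set P : ℕ → Prop := fun j => dig β 1 j ≠ 0 with hP
  have hspec : P (Nat.findGreatest P k) := Nat.findGreatest_spec (Nat.zero_le k) hP0
  refine ⟨Nat.findGreatest P k, hspec, ?_⟩
  intro j hj
  by_cases hjk : j ≤ k
  · by_contra hne
    exact absurd (Nat.le_findGreatest (P := P) hjk hne) (by omega)
  · exact hdig j (by omega)

lemma vv_shift_eq_iter (hβ : 1 < β) (k : ℕ) :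
    vv β (fun j => dig β 1 (k+j)) = (Tb β)^[k] 1 := by
  have h1 : ∀ j, dig β 1 (k+j) = dig β ((Tb β)^[k] 1) j := fun j => dig_shift 1 k j
  simp only [h1]
  exact (hasSum_dig hβ (iter_nonneg' zero_le_one k) (iter_le_one' le_rfl k)).tsum_eq

end

noncomputable def eGen (β : ℝ) (m : ℕ) : ℕ → ℤ :=
  fun n => if n % (m+1) = m then dig β 1 m - 1 else dig β 1 (n % (m+1))

section
variable {β : ℝ}

lemma finCase (hβ : 1 < β) {m : ℕ} (hm1 : dig β 1 m ≠ 0)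
    (hm2 : ∀ k, m < k → dig β 1 k = 0) :
    (∀ j, 0 ≤ eGen β m j) ∧ (∀ j, eGen β m j ≤ ⌊β⌋) ∧
    vv β (eGen β m) = 1 ∧
    (∀ k, vv β (fun j => eGen β m (k+j)) ≤ 1) ∧
    (∀ k, 0 < vv β (fun j => eGen β m (k+j))) := by
  have hb0 : (0:ℝ) < β := by linarith
  set p := m + 1 with hp
  set e := eGen β m with he
  have hedef : ∀ n, e n = if n % p = m then dig β 1 m - 1 else dig β 1 (n % p) :=
    fun n => rfl
  have hd0 : ∀ j, (0:ℤ) ≤ dig β 1 j := dig_nonneg hβ zero_le_one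
  have hdle : ∀ j, dig β 1 j ≤ ⌊β⌋ := dig_le_floor hβ zero_le_one le_rfl
  have hdm : 1 ≤ dig β 1 m := by have := hd0 m; omega
  have he0 : ∀ j, 0 ≤ e j := by
    intro j; rw [hedef]; split
    · omega
    · exact hd0 _
  have heC : ∀ j, e j ≤ ⌊β⌋ := by
    intro j; rw [hedef]; split
    · have := hdle m; omega
    · exact hdle _
  -- T^p 1 = 0
  have grow : ∀ i, (Tb β)^[p + i] 1 = β ^ i * (Tb β)^[p] 1 := by
    intro i
    induction i with
    | zero => simp
    | succ i ih =>
      have h1 : p + (i+1) = (p+i) + 1 := by omega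
      have h2 := step (β := β) 1 (p+i)
      rw [hm2 (p+i) (by omega)] at h2
      rw [h1]
      push_cast at h2
      rw [zero_add] at h2
      rw [← h2, ih, pow_succ]
      ring
  have hTp : (Tb β)^[p] 1 = 0 := by
    by_contra hne
    have hpos : 0 < (Tb β)^[p] 1 := (iter_nonneg' zero_le_one p).lt_of_ne (Ne.symm hne)
    obtain ⟨i, hi⟩ := pow_unbounded_of_one_lt (1 / (Tb β)^[p] 1) hβ
    have h1 : (1:ℝ) < β ^ i * (Tb β)^[p] 1 := by
      rw [div_lt_iff₀ hpos] at hi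
      linarith
    have h2 : (Tb β)^[p + i] 1 < 1 := by
      have hpe : p + i = (m + i) + 1 := by omega
      rw [hpe, Function.iterate_succ_apply']
      exact Int.fract_lt_one _
    have := grow i
    linarith
  -- 1 = sum of digits over one period
  have hone : (1:ℝ) = ∑ k ∈ Finset.range p, (dig β 1 k : ℝ)/β^(k+1) := by
    have := partial_sum hβ 1 p
    rw [hTp] at this
    simpa using this
  -- sum over a partial period of e vs dig
  have hsum : ∀ k, k ≤ m →
      ∑ j ∈ Finset.range (p-k), (e (k+j) : ℝ)/β^(j+1)
        = (∑ j ∈ Finset.range (p-k), (dig β 1 (k+j) : ℝ)/β^(j+1)) - 1/β^(p-k) := by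
    intro k hk
    have hcongr : ∀ j ∈ Finset.range (p-k), (e (k+j) : ℝ)/β^(j+1)
        = (dig β 1 (k+j) : ℝ)/β^(j+1) - (if j = m-k then (1:ℝ)/β^(j+1) else 0) := by
      intro j hj
      rw [Finset.mem_range] at hj
      have hkj : (k+j) % p = k+j := Nat.mod_eq_of_lt (by omega)
      by_cases hjm : j = m - k
      · have hkm : k + j = m := by omega
        rw [if_pos hjm, hedef, hkj, if_pos hkm, hkm]
        push_cast
        ring
      · have hkm : ¬ (k + j = m) := by omega
        rw [if_neg hjm, hedef, hkj, if_neg hkm]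
        ring
    rw [Finset.sum_congr rfl hcongr, Finset.sum_sub_distrib]
    congr 1
    rw [Finset.sum_ite_eq' (Finset.range (p-k)) (m-k) (fun j => (1:ℝ)/β^(j+1))]
    rw [if_pos (Finset.mem_range.mpr (by omega))]
    have hpk : m - k + 1 = p - k := by omega
    rw [hpk]
  -- periodicity
  have hper : ∀ k, (fun j => e (k + j)) = (fun j => e (k % p + j)) := by
    intro k
    funext j
    have h1 : (k + j) % p = (k % p + j) % p := by
      conv_lhs => rw [Nat.add_mod]
      conv_rhs => rw [Nat.add_mod, Nat.mod_mod_of_dvd _ (dvd_refl p)]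
    simp only [hedef, h1]
  have hperp : (fun j => e (p + j)) = e := by
    funext j
    simp only [hedef, Nat.add_mod_left]
  have hze : (fun j => e (0 + j)) = e := by funext j; rw [Nat.zero_add]
  -- vv e = 1
  have hsplit0 := vv_split (a := e) hβ he0 heC 0 p
  simp only [Nat.zero_add, hze, hperp] at hsplit0
  have hs0 := hsum 0 (Nat.zero_le m)
  simp only [Nat.zero_add, Nat.sub_zero] at hs0
  have hppos : (0:ℝ) < β ^ p := pow_pos hb0 p
  have hplt : (1:ℝ)/β^p < 1 := by
    rw [div_lt_one hppos]
    exact one_lt_pow₀ hβ (by omega)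
  have hv1 : vv β e = 1 := by
    rw [hs0, ← hone] at hsplit0
    have hfac : (vv β e - 1) * (1 - 1/β^p) = 0 := by
      field_simp at hsplit0 ⊢
      nlinarith [hsplit0]
    rcases mul_eq_zero.mp hfac with h' | h'
    · linarith
    · linarith
  -- value of shifted e for k ≤ m
  have hUk : ∀ k, k ≤ m → vv β (fun j => e (k + j))
      = ∑ j ∈ Finset.range (p-k), (dig β 1 (k+j) : ℝ)/β^(j+1) := by
    intro k hk
    have hsplit := vv_split (a := e) hβ he0 heC k (p-k)
    have hkp : k + (p - k) = p := by omega
    rw [hkp] at hsplit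
    rw [hperp, hv1] at hsplit
    rw [hsplit, hsum k hk]
    have : (1:ℝ)/β^(p-k) = 1/β^(p-k) := rfl
    field_simp
    ring
  -- equals iterate
  have hUig : ∀ k, k ≤ m → vv β (fun j => e (k + j)) = (Tb β)^[k] 1 := by
    intro k hk
    rw [hUk k hk]
    have hps := partial_sum hβ ((Tb β)^[k] 1) (p-k)
    have hit : (Tb β)^[p-k] ((Tb β)^[k] 1) = 0 := by
      rw [← Function.iterate_add_apply]
      have : p - k + k = p := by omega
      rw [this, hTp]
    rw [hit] at hps
    have hds : ∀ j, (dig β ((Tb β)^[k] 1) j : ℝ) = (dig β 1 (k+j) : ℝ) := by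
      intro j
      rw [← dig_shift]
    simp only [hds] at hps
    rw [hps]
    simp
  -- bounds for k ≤ m
  have hle1 : ∀ k, k ≤ m → vv β (fun j => e (k + j)) ≤ 1 := by
    intro k hk
    rw [hUig k hk]
    exact iter_le_one' le_rfl k
  have hpos' : ∀ k, k ≤ m → 0 < vv β (fun j => e (k + j)) := by
    intro k hk
    rw [hUk k hk]
    have hmem : m - k ∈ Finset.range (p-k) := Finset.mem_range.mpr (by omega)
    have hterm : (0:ℝ) < (dig β 1 (k+(m-k)) : ℝ)/β^((m-k)+1) := by
      have hkm : k + (m - k) = m := by omega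
      rw [hkm]
      have : (1:ℝ) ≤ (dig β 1 m : ℝ) := by exact_mod_cast hdm
      positivity
    have hsle : (dig β 1 (k+(m-k)) : ℝ)/β^((m-k)+1)
        ≤ ∑ j ∈ Finset.range (p-k), (dig β 1 (k+j) : ℝ)/β^(j+1) := by
      apply Finset.single_le_sum (f := fun j : ℕ => (dig β 1 (k+j) : ℝ)/β^(j+1)) ?_ hmem
      intro j _
      have h9 : (0:ℝ) ≤ (dig β 1 (k+j) : ℝ) := by exact_mod_cast hd0 (k+j)
      positivity
    linarith
  -- wrap up
  refine ⟨he0, heC, hv1, ?_, ?_⟩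
  · intro k
    rw [hper k]
    exact hle1 (k % p) (by have := Nat.mod_lt k (show 0 < p by omega); omega)
  · intro k
    rw [hper k]
    exact hpos' (k % p) (by have := Nat.mod_lt k (show 0 < p by omega); omega)
end

section
variable {β : ℝ}

lemma epsStar_props (hβ : 1 < β) :
    (∀ j, 0 ≤ epsStar β j) ∧ (∀ j, epsStar β j ≤ ⌊β⌋) ∧
    vv β (epsStar β) = 1 ∧
    (∀ k, vv β (fun j => epsStar β (k+j)) ≤ 1) ∧
    (∀ k, 0 < vv β (fun j => epsStar β (k+j))) := by
  have hb0 : (0:ℝ) < β := by linarith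
  by_cases h : finiteExpOne β
  · rw [epsStar, dif_pos h]
    obtain ⟨hm1, hm2⟩ := Classical.choose_spec h
    exact finCase hβ hm1 hm2
  · have he : epsStar β = dig β 1 := by rw [epsStar, dif_neg h]
    rw [he]
    have hpos : ∀ k, (0:ℝ) < (Tb β)^[k] 1 := by
      intro k
      rcases lt_or_eq_of_le (iter_nonneg' (zero_le_one) k) with h' | h'
      · exact h'
      · exact absurd (fin_of_zero hβ h'.symm) h
    refine ⟨dig_nonneg hβ zero_le_one, dig_le_floor hβ zero_le_one le_rfl, ?_, ?_, ?_⟩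
    · have := vv_shift_eq_iter hβ 0
      simp only [zero_add] at this
      simpa using this
    · intro k; rw [vv_shift_eq_iter hβ k]; exact iter_le_one' le_rfl k
    · intro k; rw [vv_shift_eq_iter hβ k]; exact hpos k

end

section
variable {β : ℝ}

lemma lexLt_of_lt_one (hβ : 1 < β) {y : ℝ} (hy0 : 0 ≤ y) (hy1 : y < 1) :
    lexLt (dig β y) (epsStar β) := by
  classical
  have hb0 : (0:ℝ) < β := by linarith
  obtain ⟨he0, heC, hv1, hle, hpos⟩ := epsStar_props hβ
  set e := epsStar β with he
  have hvy : vv β (dig β y) = y := (hasSum_dig hβ hy0 hy1.le).tsum_eq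
  by_contra hnot
  by_cases heq : dig β y = e
  · rw [heq, hv1] at hvy
    linarith
  · have hex : ∃ j, dig β y j ≠ e j := Function.ne_iff.mp heq
    set m := Nat.find hex with hmdef
    have hm : dig β y m ≠ e m := Nat.find_spec hex
    have hagree : ∀ j < m, dig β y j = e j := by
      intro j hj
      by_contra hne
      have : Nat.find hex ≤ j := Nat.find_le hne
      omega
    have hml : e m < dig β y m := by
      rcases lt_trichotomy (dig β y m) (e m) with h' | h' | h'
      · exact absurd ⟨m, hagree, h'⟩ hnot
      · exact absurd h' hm
      · exact h'
    -- split y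
    have hsy := vv_split (a := dig β y) hβ (dig_nonneg hβ hy0) (dig_le_floor hβ hy0 hy1.le) 0 (m+1)
    have hze' : (fun j => dig β y (0 + j)) = dig β y := by funext j; rw [Nat.zero_add]
    simp only [Nat.zero_add, hze'] at hsy
    rw [hvy] at hsy
    -- split 1
    have hse := vv_split (a := e) hβ he0 heC 0 (m+1)
    have hze'' : (fun j => e (0 + j)) = e := by funext j; rw [Nat.zero_add]
    simp only [Nat.zero_add, hze''] at hse
    rw [hv1] at hse
    have htail_e : vv β (fun j => e (m + 1 + j)) ≤ 1 := hle (m+1)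
    have htail_y : 0 ≤ vv β (fun j => dig β y (m + 1 + j)) :=
      vv_nonneg (fun j => dig_nonneg hβ hy0 _) hb0
    have hpow : (0:ℝ) < β ^ (m+1) := pow_pos hb0 _
    -- compare sums
    have hsum_eq : ∑ j ∈ Finset.range m, (dig β y j : ℝ)/β^(j+1)
        = ∑ j ∈ Finset.range m, (e j : ℝ)/β^(j+1) := by
      apply Finset.sum_congr rfl
      intro j hj
      rw [hagree j (Finset.mem_range.mp hj)]
    have hstep : (e m : ℝ) + 1 ≤ (dig β y m : ℝ) := by
      have : e m + 1 ≤ dig β y m := hml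
      exact_mod_cast this
    rw [Finset.sum_range_succ] at hsy hse
    rw [hsum_eq] at hsy
    have h1 : 1 - vv β (fun j => e (m + 1 + j)) / β ^ (m+1)
        = ∑ j ∈ Finset.range m, (e j : ℝ)/β^(j+1) + (e m : ℝ)/β^(m+1) := by
      linarith [hse]
    have hA : ((e m : ℝ)+1)/β^(m+1) ≤ (dig β y m : ℝ)/β^(m+1) := by gcongr
    have hB : 0 ≤ vv β (fun j => dig β y (m + 1 + j))/β^(m+1) := div_nonneg htail_y hpow.le
    have hC : vv β (fun j => e (m+1+j))/β^(m+1) ≤ 1/β^(m+1) := by gcongr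
    have h1split : ((e m : ℝ)+1)/β^(m+1) = (e m : ℝ)/β^(m+1) + 1/β^(m+1) := by ring
    linarith [hsy]
end

section
variable {β : ℝ}

lemma iter_lt_one2 {x : ℝ} (hx : x < 1) (n : ℕ) : (Tb β)^[n] x < 1 := by
  cases n with
  | zero => exact hx
  | succ n => rw [Function.iterate_succ_apply']; exact Int.fract_lt_one _

lemma forward_dir (hβ : 1 < β) {ε : ℕ → ℤ} (h : seqAdmissible β ε) :
    ∀ k, lexLt (fun n => ε (k+n)) (epsStar β) := by
  obtain ⟨x, ⟨hx0, hx1⟩, hd⟩ := h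
  intro k
  have hfun : (fun n => ε (k+n)) = dig β ((Tb β)^[k] x) := by
    funext n
    rw [← hd (k+n), dig_shift]
  rw [hfun]
  exact lexLt_of_lt_one hβ (iter_nonneg' hx0 k) (iter_lt_one2 hx1 k)

lemma backward_dir (hβ : 1 < β) {ε : ℕ → ℤ} (hε : ∀ n, 0 ≤ ε n)
    (hlex : ∀ k, lexLt (fun n => ε (k+n)) (epsStar β)) : seqAdmissible β ε := by
  have hb0 : (0:ℝ) < β := by linarith
  obtain ⟨he0, heC, hv1, hle, hpos⟩ := epsStar_props hβ
  set e := epsStar β with he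
  -- bound on digits
  have hM : ∀ n, ε n ≤ e 0 := by
    intro n
    obtain ⟨k0, ha, hb⟩ := hlex n
    rcases Nat.eq_zero_or_pos k0 with h' | h'
    · rw [h'] at hb
      have h2 : ε (n + 0) < e 0 := hb
      simp only [Nat.add_zero] at h2
      omega
    · have h2 : ε (n + 0) = e 0 := ha 0 h'
      simp only [Nat.add_zero] at h2
      omega
  have hMε : ∀ k j, ε (k + j) ≤ e 0 := fun k j => hM _
  have hε' : ∀ k j, 0 ≤ ε (k + j) := fun k j => hε _
  set X : ℕ → ℝ := fun k => vv β (fun j => ε (k + j)) with hX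
  have hX0 : ∀ k, 0 ≤ X k := fun k => vv_nonneg (hε' k) hb0
  -- bounded above
  have hXle : ∀ k, X k ≤ vv β (fun _ => e 0) := by
    intro k
    apply Summable.tsum_le_tsum ?_ (summable_aux hβ (hε' k) (hMε k))
      (summable_aux hβ (fun _ => he0 0) (fun _ => le_refl (e 0)))
    intro j
    have h1 : (ε (k+j) : ℝ) ≤ (e 0 : ℝ) := by exact_mod_cast hMε k j
    have h2 : (0:ℝ) ≤ (ε (k+j) : ℝ) := by exact_mod_cast hε' k j
    gcongr
  have hbdd : BddAbove (Set.range X) := by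
    refine ⟨vv β (fun _ => e 0), ?_⟩
    rintro _ ⟨k, rfl⟩
    exact hXle k
  set S : ℝ := ⨆ k, X k with hS
  have hXS : ∀ k, X k ≤ S := fun k => le_ciSup hbdd k
  -- key inequality
  have key : ∀ k, ∃ m : ℕ,
      X k ≤ 1 - (1 + vv β (fun j => e (m + 1 + j)) - S) / β ^ (m+1) := by
    intro k
    obtain ⟨m, hagree0, hm0⟩ := hlex k
    have hagree : ∀ j, j < m → ε (k + j) = e j := fun j hj => hagree0 j hj
    have hm : ε (k + m) < e m := hm0
    refine ⟨m, ?_⟩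
    have hpow : (0:ℝ) < β ^ (m+1) := pow_pos hb0 _
    have hsplit := vv_split (a := ε) hβ hε (fun n => hM n) k (m+1)
    have htl : (fun j => ε (k + (m+1) + j)) = fun j => ε ((k + m + 1) + j) := by
      funext j; congr 1 <;> omega
    rw [htl] at hsplit
    have hXk1 : vv β (fun j => ε ((k + m + 1) + j)) = X (k + m + 1) := rfl
    rw [hXk1] at hsplit
    -- 1 split
    have hse := vv_split (a := e) hβ he0 heC 0 (m+1)
    have hze'' : (fun j => e (0 + j)) = e := by funext j; rw [Nat.zero_add]
    simp only [Nat.zero_add, hze''] at hse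
    rw [hv1] at hse
    -- prefix sums equal
    rw [Finset.sum_range_succ] at hsplit hse
    have hsum_eq : ∑ j ∈ Finset.range m, (ε (k + j) : ℝ)/β^(j+1)
        = ∑ j ∈ Finset.range m, (e j : ℝ)/β^(j+1) := by
      apply Finset.sum_congr rfl
      intro j hj
      rw [hagree j (Finset.mem_range.mp hj)]
    rw [hsum_eq] at hsplit
    have hstep : (ε (k + m) : ℝ) ≤ (e m : ℝ) - 1 := by
      have : ε (k + m) ≤ e m - 1 := by omega
      exact_mod_cast this
    have hA : (ε (k + m) : ℝ)/β^(m+1) ≤ ((e m : ℝ) - 1)/β^(m+1) := by gcongr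
    have hB : X (k + m + 1)/β^(m+1) ≤ S/β^(m+1) := by
      gcongr
      exact hXS _
    have hde : ((e m : ℝ) - 1)/β^(m+1) = (e m : ℝ)/β^(m+1) - 1/β^(m+1) := by ring
    have hfin : 1 - (1 + vv β (fun j => e (m + 1 + j)) - S) / β ^ (m+1)
        = (1 - vv β (fun j => e (m + 1 + j))/β^(m+1)) - 1/β^(m+1) + S/β^(m+1) := by
      ring
    linarith [hsplit, hse]
  -- S ≤ 1
  have hS1 : S ≤ 1 := by
    by_contra hS1
    push_neg at hS1
    have hub : ∀ k, X k ≤ 1 + (S - 1)/β := by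
      intro k
      obtain ⟨m, hk⟩ := key k
      have hpow : (0:ℝ) < β ^ (m+1) := pow_pos hb0 _
      have hu0 : 0 < vv β (fun j => e (m + 1 + j)) := hpos (m+1)
      have h1 : X k ≤ 1 + (S - 1)/β^(m+1) := by
        have : (1 + vv β (fun j => e (m + 1 + j)) - S)/β^(m+1)
            ≥ (1 - S)/β^(m+1) := by gcongr <;> linarith
        have h2 : (1 - S)/β^(m+1) = -((S-1)/β^(m+1)) := by ring
        linarith
      have h3 : (S - 1)/β^(m+1) ≤ (S - 1)/β := by
        apply div_le_div_of_nonneg_left (by linarith) hb0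
        calc β = β ^ 1 := (pow_one β).symm
          _ ≤ β ^ (m+1) := pow_le_pow_right₀ (by linarith) (by omega)
      linarith
    have h3 : S ≤ 1 + (S - 1)/β := ciSup_le hub
    have h4 : (S - 1) ≤ (S - 1)/β := by linarith
    have h5 : (S - 1)/β < S - 1 := by
      rw [div_lt_iff₀ hb0]
      nlinarith
    linarith
  -- each X k < 1
  have hXlt : ∀ k, X k < 1 := by
    intro k
    obtain ⟨m, hk⟩ := key k
    have hpow : (0:ℝ) < β ^ (m+1) := pow_pos hb0 _
    have hu0 : 0 < vv β (fun j => e (m + 1 + j)) := hpos (m+1)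
    have : 0 < (1 + vv β (fun j => e (m + 1 + j)) - S)/β^(m+1) := by
      apply div_pos ?_ hpow
      linarith
    linarith
  -- recurrence
  have hrec : ∀ k, β * X k = (ε k : ℝ) + X (k+1) := by
    intro k
    have hstep := vv_step (a := fun j => ε (k + j)) hβ (hε' k) (hMε k)
    have htl : (fun j => ε (k + (j+1))) = fun j => ε ((k+1) + j) := by
      funext j; congr 1 <;> omega
    rw [htl] at hstep
    have hXk : vv β (fun j => ε (k + j)) = X k := rfl
    have hXk1 : vv β (fun j => ε ((k+1) + j)) = X (k+1) := rfl
    rw [hXk, hXk1] at hstep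
    simp only [Nat.add_zero] at hstep
    field_simp at hstep
    linarith
  -- iterates
  have hiter : ∀ n, (Tb β)^[n] (X 0) = X n := by
    intro n
    induction n with
    | zero => rfl
    | succ n ih =>
      rw [Function.iterate_succ_apply', ih, Tb, hrec n]
      rw [Int.fract_intCast_add]
      exact Int.fract_eq_self.mpr ⟨hX0 (n+1), hXlt (n+1)⟩
  refine ⟨X 0, ⟨hX0 0, hXlt 0⟩, ?_⟩
  intro n
  rw [dig, hiter n, hrec n, Int.floor_intCast_add]
  have : ⌊X (n+1)⌋ = 0 := Int.floor_eq_zero_iff.mpr ⟨hX0 (n+1), hXlt (n+1)⟩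
  rw [this]
  omega
end

/-- Parry's criterion for admissibility of a sequence. -/
theorem stmt2 (β : ℝ) (hβ : 1 < β) (ε : ℕ → ℤ) (hε : ∀ n, 0 ≤ ε n) :
    seqAdmissible β ε ↔ ∀ k : ℕ, lexLt (fun n => ε (k + n)) (epsStar β) := by
  constructor
  · intro h k
    exact forward_dir hβ h k
  · intro h
    exact backward_dir hβ hε h
end

section
/- For any β > 1, for Lebesgue-almost every x ∈ [0,1), the limit of (1/n) log_β |x − ω_n(x)| as n → ∞ equals −1. -/
open Filter MeasureTheory Set

lemma conv_eq (β : ℝ) (hβ : β ≠ 0) (x : ℝ) (n : ℕ) :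
    x = conv β x n + (Tb β)^[n] x / β ^ n := by
  induction n with
  | zero => simp [conv]
  | succ n ih =>
    have hT : (Tb β)^[n+1] x = β * (Tb β)^[n] x - (dig β x n : ℝ) := by
      rw [Function.iterate_succ_apply', Tb, dig, ← Int.self_sub_floor]
    have hc : conv β x (n+1) = conv β x n + (dig β x n : ℝ) / β ^ (n+1) := by
      rw [conv, Finset.sum_range_succ, ← conv]
    have hpow : (β : ℝ) ^ n ≠ 0 := pow_ne_zero _ hβ
    have key : conv β x (n+1) + (Tb β)^[n+1] x / β ^ (n+1)
        = conv β x n + (Tb β)^[n] x / β ^ n := by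
      rw [hc, hT]; field_simp; ring
    rw [key]; exact ih

lemma ncard_biUnion_le {ι α : Type*} (s : Finset ι) (f : ι → Set α) :
    (⋃ i ∈ s, f i).ncard ≤ ∑ i ∈ s, (f i).ncard := by
  classical
  induction s using Finset.induction_on with
  | empty => simp
  | insert a s hns ih =>
    rw [Finset.set_biUnion_insert, Finset.sum_insert hns]
    exact le_trans (Set.ncard_union_le _ _) (by gcongr)

def Wset (β : ℝ) (n : ℕ) (t : ℝ) : Set (Fin n → ℤ) :=
  {w | ∃ x, x ∈ Set.Ico (0:ℝ) t ∧ ∀ k : Fin n, dig β x k = w k}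

lemma dig_succ (β x : ℝ) (k : ℕ) : dig β x (k+1) = dig β (Tb β x) k := by
  rw [dig, dig, Function.iterate_succ_apply]

lemma Wset_bound (β : ℝ) (hβ : 1 < β) :
    ∀ n : ℕ, ∀ t : ℝ, 0 ≤ t → t ≤ 1 →
      (Wset β n t).Finite ∧ ((Wset β n t).ncard : ℝ) ≤ β * (β^n - 1)/(β-1) * t + 1 := by
  have hβ0 : (0:ℝ) < β := lt_trans one_pos hβ
  intro n
  induction n with
  | zero =>
    intro t ht0 ht1
    have hsub : (Wset β 0 t).Subsingleton := by
      intro w _ w' _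
      funext k; exact absurd k.2 (by omega)
    constructor
    · exact hsub.finite
    · have : (Wset β 0 t).ncard ≤ 1 := by
        rcases hsub.eq_empty_or_singleton with h | ⟨a, h⟩ <;> simp [h]
      calc ((Wset β 0 t).ncard : ℝ) ≤ 1 := by exact_mod_cast this
        _ ≤ _ := by
          have : 0 ≤ β * (β^0 - 1)/(β-1) * t := by
            apply mul_nonneg _ ht0
            apply div_nonneg _ (by linarith)
            simp
          linarith
  | succ n ih =>
    intro t ht0 ht1
    set J : ℤ := ⌊β * t⌋ with hJ
    have hJ0 : 0 ≤ J := Int.floor_nonneg.2 (by positivity)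
    set s : ℤ → ℝ := fun j => if j = J then Int.fract (β * t) else 1 with hs
    set Img : ℤ → Set (Fin (n+1) → ℤ) :=
      fun j => (fun w : Fin n → ℤ => (Fin.cons j w : Fin (n+1) → ℤ)) '' Wset β n (s j) with hImg
    have hsmem : ∀ j, 0 ≤ s j ∧ s j ≤ 1 := by
      intro j
      by_cases h : j = J <;> simp [hs, h, Int.fract_nonneg, (Int.fract_lt_one _).le]
    have cover : Wset β (n+1) t ⊆
        ⋃ j ∈ Finset.Icc (0:ℤ) J, Img j := by
      rintro w ⟨x, ⟨hx0, hxt⟩, hw⟩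
      have hx1 : x < 1 := lt_of_lt_of_le hxt ht1
      have hj0 : (0:ℤ) ≤ ⌊β * x⌋ := Int.floor_nonneg.2 (by positivity)
      have hjJ : ⌊β * x⌋ ≤ J := Int.floor_le_floor (by nlinarith)
      have hw0 : w 0 = ⌊β * x⌋ := by
        rw [← hw 0]; simp [dig]
      refine Set.mem_biUnion (Finset.mem_Icc.2 ⟨hj0, hjJ⟩) ⟨Fin.tail w, ?_, ?_⟩
      · refine ⟨Tb β x, ⟨Int.fract_nonneg _, ?_⟩, ?_⟩
        · by_cases h : ⌊β * x⌋ = J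
          · simp only [hs, if_pos h]
            have h1 : Tb β x = β * x - (J:ℝ) := by rw [Tb, Int.fract, h]
            have h2 : Int.fract (β * t) = β * t - (J:ℝ) := by rw [Int.fract, hJ]
            rw [h1, h2]
            have : β * x < β * t := by nlinarith
            linarith
          · simp only [hs, if_neg h]
            exact Int.fract_lt_one _
        · intro k
          rw [← dig_succ]
          have := hw k.succ
          rwa [Fin.val_succ] at this
      · rw [← hw0]; exact Fin.cons_self_tail w
    have hfin : ∀ j ∈ Finset.Icc (0:ℤ) J,
        (Img j).Finite := by
      intro j _
      exact ((ih (s j) (hsmem j).1 (hsmem j).2).1).image _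
    have hWfin : (Wset β (n+1) t).Finite :=
      Set.Finite.subset (Set.Finite.biUnion (Finset.Icc (0:ℤ) J).finite_toSet hfin) cover
    refine ⟨hWfin, ?_⟩
    have hcard : (Wset β (n+1) t).ncard ≤
        ∑ j ∈ Finset.Icc (0:ℤ) J, (Img j).ncard := by
      refine le_trans (Set.ncard_le_ncard cover ?_) (ncard_biUnion_le _ _)
      exact Set.Finite.biUnion (Finset.Icc (0:ℤ) J).finite_toSet hfin
    have himg : ∀ j, (Img j).ncard
        ≤ (Wset β n (s j)).ncard := fun j =>
      Set.ncard_image_le ((ih (s j) (hsmem j).1 (hsmem j).2).1)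
    have hD : (0:ℝ) ≤ β * (β^n - 1)/(β-1) := by
      apply div_nonneg _ (by linarith)
      have : (1:ℝ) ≤ β ^ n := one_le_pow₀ hβ.le
      nlinarith
    have hcard2 : (Wset β (n+1) t).ncard ≤
        ∑ j ∈ Finset.Icc (0:ℤ) J, (Wset β n (s j)).ncard :=
      le_trans hcard (Finset.sum_le_sum (fun j _ => himg j))
    have hcastsum : ((Wset β (n+1) t).ncard : ℝ) ≤
        ∑ j ∈ Finset.Icc (0:ℤ) J, ((Wset β n (s j)).ncard : ℝ) := by
      exact_mod_cast hcard2
    have hterm : ∀ j ∈ Finset.Icc (0:ℤ) J,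
        ((Wset β n (s j)).ncard : ℝ) ≤ β * (β^n - 1)/(β-1) * s j + 1 :=
      fun j _ => (ih (s j) (hsmem j).1 (hsmem j).2).2
    have hsum1 : ∑ j ∈ Finset.Icc (0:ℤ) J, s j = (J:ℝ) + Int.fract (β * t) := by
      have hJmem : J ∈ Finset.Icc (0:ℤ) J := Finset.mem_Icc.2 ⟨hJ0, le_refl _⟩
      have h1 : ∀ j ∈ Finset.Icc (0:ℤ) J,
          s j = (if j = J then (Int.fract (β * t) - 1) else 0) + 1 := by
        intro j _
        by_cases h : j = J <;> simp [hs, h]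
      rw [Finset.sum_congr rfl h1, Finset.sum_add_distrib, Finset.sum_ite_eq' _ J,
        if_pos hJmem, Finset.sum_const, Int.card_Icc]
      have : (((J + 1 - 0).toNat : ℤ) : ℝ) = (J:ℝ) + 1 := by
        rw [Int.toNat_of_nonneg (by omega)]; push_cast; ring
      simp only [nsmul_eq_mul]
      rw [show ((((J + 1 - 0).toNat : ℕ)) : ℝ) = (J:ℝ) + 1 by exact_mod_cast this]
      ring
    have hcardIcc : ((Finset.Icc (0:ℤ) J).card : ℝ) = (J:ℝ) + 1 := by
      rw [Int.card_Icc]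
      have : (((J + 1 - 0).toNat : ℤ) : ℝ) = (J:ℝ) + 1 := by
        rw [Int.toNat_of_nonneg (by omega)]; push_cast; ring
      exact_mod_cast this
    have hsum2 : ∑ j ∈ Finset.Icc (0:ℤ) J, (β * (β^n - 1)/(β-1) * s j + 1)
        = β * (β^n - 1)/(β-1) * ((J:ℝ) + Int.fract (β * t)) + ((J:ℝ) + 1) := by
      rw [Finset.sum_add_distrib, ← Finset.mul_sum, hsum1, Finset.sum_const,
        nsmul_eq_mul, mul_one, hcardIcc]
    have hfr : (J:ℝ) + Int.fract (β * t) = β * t := by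
      rw [hJ]; exact Int.floor_add_fract _
    have hJle : (J:ℝ) ≤ β * t := by rw [hJ]; exact Int.floor_le _
    have halg : β * (β^n - 1)/(β-1) * (β * t) + (β * t) + 1
        = β * (β^(n+1) - 1)/(β-1) * t + 1 := by
      have hne : β - 1 ≠ 0 := by linarith
      field_simp
      ring
    calc ((Wset β (n+1) t).ncard : ℝ)
        ≤ ∑ j ∈ Finset.Icc (0:ℤ) J, (β * (β^n - 1)/(β-1) * s j + 1) :=
          le_trans hcastsum (Finset.sum_le_sum hterm)
      _ = β * (β^n - 1)/(β-1) * (β * t) + ((J:ℝ) + 1) := by rw [hsum2, hfr]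
      _ ≤ β * (β^n - 1)/(β-1) * (β * t) + (β * t) + 1 := by linarith
      _ = β * (β^(n+1) - 1)/(β-1) * t + 1 := halg

lemma iterTb_mem_Ico {β : ℝ} {x : ℝ} (hx : x ∈ Set.Ico (0:ℝ) 1) (n : ℕ) :
    (Tb β)^[n] x ∈ Set.Ico (0:ℝ) 1 := by
  induction n with
  | zero => exact hx
  | succ n ih =>
    rw [Function.iterate_succ_apply']
    exact ⟨Int.fract_nonneg _, Int.fract_lt_one _⟩

lemma bad_measure (β : ℝ) (hβ : 1 < β) (n : ℕ) (δ : ℝ) (hδ0 : 0 < δ) :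
    volume {x : ℝ | x ∈ Set.Ico (0:ℝ) 1 ∧ (Tb β)^[n] x < δ}
      ≤ ENNReal.ofReal ((β/(β-1) + 1) * δ) := by
  have hβ0 : (0:ℝ) < β := lt_trans one_pos hβ
  have hβ1 : (0:ℝ) < β - 1 := by linarith
  have hpow : (0:ℝ) < β ^ n := pow_pos hβ0 n
  have hpow1 : (1:ℝ) ≤ β ^ n := one_le_pow₀ hβ.le
  obtain ⟨hfin, hcard⟩ := Wset_bound β hβ n 1 zero_le_one le_rfl
  set v : (Fin n → ℤ) → ℝ := fun w => ∑ k : Fin n, ((w k : ℝ) / β ^ ((k:ℕ) + 1)) with hv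
  have cover : {x : ℝ | x ∈ Set.Ico (0:ℝ) 1 ∧ (Tb β)^[n] x < δ}
      ⊆ ⋃ w ∈ hfin.toFinset, Set.Ico (v w) (v w + δ / β ^ n) := by
    rintro x ⟨hx, hxδ⟩
    set w : Fin n → ℤ := fun k => dig β x k with hw
    have hwmem : w ∈ hfin.toFinset := by
      rw [Set.Finite.mem_toFinset]
      exact ⟨x, hx, fun k => rfl⟩
    refine Set.mem_biUnion hwmem ?_
    have hvw : v w = conv β x n := by
      rw [hv, conv, ← Fin.sum_univ_eq_sum_range]
    have hid := conv_eq β (ne_of_gt hβ0) x n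
    have hTnn : 0 ≤ (Tb β)^[n] x := (iterTb_mem_Ico hx n).1
    constructor
    · rw [hvw]
      have : 0 ≤ (Tb β)^[n] x / β ^ n := div_nonneg hTnn hpow.le
      linarith
    · rw [hvw]
      have : (Tb β)^[n] x / β ^ n < δ / β ^ n := by
        apply div_lt_div_of_pos_right hxδ hpow
      linarith
  have hcardle : ((hfin.toFinset.card : ℝ)) * (δ / β ^ n) ≤ (β/(β-1) + 1) * δ := by
    have hc : ((hfin.toFinset.card : ℝ)) ≤ β * (β^n - 1)/(β-1) * 1 + 1 := by
      rwa [← Set.ncard_eq_toFinset_card (Wset β n 1) hfin]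
    have hkey : β * (β^n - 1)/(β-1) * 1 + 1 ≤ (β/(β-1) + 1) * β ^ n := by
      have e : (β/(β-1) + 1) * β ^ n - (β * (β^n - 1)/(β-1) * 1 + 1)
          = β/(β-1) + (β ^ n - 1) := by
        field_simp
        ring
      have h1 : 0 ≤ β/(β-1) := div_nonneg hβ0.le hβ1.le
      linarith
    have h2 : ((hfin.toFinset.card : ℝ)) ≤ (β/(β-1) + 1) * β ^ n := le_trans hc hkey
    have h3 : 0 ≤ δ / β ^ n := div_nonneg hδ0.le hpow.le
    calc ((hfin.toFinset.card : ℝ)) * (δ / β ^ n) ≤ ((β/(β-1) + 1) * β ^ n) * (δ / β ^ n) :=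
          mul_le_mul_of_nonneg_right h2 h3
      _ = (β/(β-1) + 1) * δ := by field_simp
  calc volume {x : ℝ | x ∈ Set.Ico (0:ℝ) 1 ∧ (Tb β)^[n] x < δ}
      ≤ volume (⋃ w ∈ hfin.toFinset, Set.Ico (v w) (v w + δ / β ^ n)) := measure_mono cover
    _ ≤ ∑ w ∈ hfin.toFinset, volume (Set.Ico (v w) (v w + δ / β ^ n)) :=
        measure_biUnion_finset_le _ _
    _ = hfin.toFinset.card • ENNReal.ofReal (δ / β ^ n) := by
        rw [Finset.sum_congr rfl (fun w _ => by rw [Real.volume_Ico, add_sub_cancel_left]),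
          Finset.sum_const]
    _ = ENNReal.ofReal ((hfin.toFinset.card : ℝ) * (δ / β ^ n)) := by
        rw [nsmul_eq_mul, ← ENNReal.ofReal_natCast, ← ENNReal.ofReal_mul (by positivity)]
    _ ≤ ENNReal.ofReal ((β/(β-1) + 1) * δ) := ENNReal.ofReal_le_ofReal hcardle

/-- for Lebesgue-a.e. x ∈ [0,1), (1/n) log_β |x − ω_n(x)| → −1. -/
theorem stmt6 (β : ℝ) (hβ : 1 < β) :
    ∀ᵐ x ∂(volume.restrict (Set.Ico (0:ℝ) 1)),
      Tendsto (fun n : ℕ => Real.logb β |x - conv β x n| / n) atTop (nhds (-1)) := by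
  have hβ0 : (0:ℝ) < β := lt_trans one_pos hβ
  set μ := volume.restrict (Set.Ico (0:ℝ) 1) with hμ
  set r : ℕ → ℝ := fun m => β ^ (-(1:ℝ)/(m+1)) with hr
  have hr0 : ∀ m, 0 < r m := fun m => Real.rpow_pos_of_pos hβ0 _
  have hr1 : ∀ m, r m < 1 := by
    intro m
    apply Real.rpow_lt_one_of_one_lt_of_neg hβ
    apply div_neg_of_neg_of_pos (by norm_num)
    positivity
  set B : ℕ → ℕ → Set ℝ :=
    fun m n => {x | x ∈ Set.Ico (0:ℝ) 1 ∧ (Tb β)^[n] x < (r m)^n} with hB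
  have hC0 : (0:ℝ) ≤ β/(β-1) + 1 := by
    have : (0:ℝ) ≤ β/(β-1) := div_nonneg hβ0.le (by linarith)
    linarith
  have hBC : ∀ m, ∀ᵐ x ∂μ, ∀ᶠ n in atTop, x ∉ B m n := by
    intro m
    apply MeasureTheory.ae_eventually_notMem
    have hb : ∀ n, μ (B m n) ≤ ENNReal.ofReal (β/(β-1)+1) * (ENNReal.ofReal (r m))^n := by
      intro n
      calc μ (B m n) ≤ volume (B m n) := Measure.restrict_apply_le _ _
        _ ≤ ENNReal.ofReal ((β/(β-1)+1) * (r m)^n) :=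
            bad_measure β hβ n _ (pow_pos (hr0 m) n)
        _ = _ := by rw [ENNReal.ofReal_mul hC0, ENNReal.ofReal_pow (hr0 m).le]
    have hle : (∑' n, μ (B m n))
        ≤ ENNReal.ofReal (β/(β-1)+1) * ∑' n : ℕ, (ENNReal.ofReal (r m))^n := by
      rw [← ENNReal.tsum_mul_left]; exact ENNReal.tsum_le_tsum hb
    refine ne_top_of_le_ne_top ?_ hle
    rw [ENNReal.tsum_geometric]
    apply ENNReal.mul_ne_top ENNReal.ofReal_ne_top
    rw [Ne, ENNReal.inv_eq_top, tsub_eq_zero_iff_le, not_le]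
    exact ENNReal.ofReal_lt_one.2 (hr1 m)
  have hae : ∀ᵐ x ∂μ, ∀ m : ℕ, ∀ᶠ n in atTop, x ∉ B m n := ae_all_iff.2 hBC
  have hmem : ∀ᵐ x ∂μ, x ∈ Set.Ico (0:ℝ) 1 := ae_restrict_mem measurableSet_Ico
  filter_upwards [hae, hmem] with x hx hxI
  have hx' : ∀ m, ∀ᶠ n in atTop, (r m)^n ≤ (Tb β)^[n] x := by
    intro m
    filter_upwards [hx m] with n hn
    by_contra h
    push_neg at h
    exact hn ⟨hxI, h⟩
  have hpos : ∀ n, 0 < (Tb β)^[n] x := by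
    intro n
    rcases ((hx' 0).and (eventually_ge_atTop n)).exists with ⟨N, hN1, hN2⟩
    by_contra h
    push_neg at h
    have h0 : (Tb β)^[n] x = 0 := le_antisymm h (iterTb_mem_Ico hxI n).1
    have hN0 : (Tb β)^[N] x = 0 := by
      have hNn : N = (N - n) + n := by omega
      rw [hNn, Function.iterate_add_apply, h0]
      exact Function.iterate_fixed (by simp [Tb]) _
    rw [hN0] at hN1
    exact absurd hN1 (not_le.2 (pow_pos (hr0 0) N))
  have hq : Tendsto (fun n : ℕ => Real.logb β ((Tb β)^[n] x) / n) atTop (nhds 0) := by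
    rw [Metric.tendsto_atTop]
    intro ε hε
    obtain ⟨m, hm⟩ := exists_nat_one_div_lt hε
    obtain ⟨N, hN⟩ := eventually_atTop.1 (hx' m)
    refine ⟨max N 1, fun n hn => ?_⟩
    have hn1 : 1 ≤ n := le_trans (le_max_right _ _) hn
    have hnN : N ≤ n := le_trans (le_max_left _ _) hn
    have hnR : (0:ℝ) < n := by exact_mod_cast hn1
    have hT1 : (Tb β)^[n] x < 1 := (iterTb_mem_Ico hxI n).2
    have hup : Real.logb β ((Tb β)^[n] x) ≤ 0 :=
      Real.logb_nonpos hβ (hpos n).le hT1.le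
    have hrn : (r m)^n = β ^ ((-(1:ℝ)/(m+1)) * n) := by
      rw [Real.rpow_mul hβ0.le, Real.rpow_natCast]
    have hlogr : Real.logb β ((r m)^n) = (-(1:ℝ)/(m+1)) * n := by
      rw [hrn, Real.logb_rpow hβ0 (by linarith)]
    have hlow : (-(1:ℝ)/(m+1)) * n ≤ Real.logb β ((Tb β)^[n] x) := by
      rw [← hlogr]
      exact Real.logb_le_logb_of_le hβ (pow_pos (hr0 m) n) (hN n hnN)
    have hql : -(1/((m:ℝ)+1)) ≤ Real.logb β ((Tb β)^[n] x) / n := by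
      rw [le_div_iff₀ hnR]
      calc -(1/((m:ℝ)+1)) * n = -1/((m:ℝ)+1) * n := by ring
        _ ≤ _ := hlow
    have hqu : Real.logb β ((Tb β)^[n] x) / n ≤ 0 := div_nonpos_of_nonpos_of_nonneg hup hnR.le
    rw [Real.dist_eq, sub_zero]
    have : |Real.logb β ((Tb β)^[n] x) / n| ≤ 1/((m:ℝ)+1) := by
      rw [abs_le]
      constructor
      · exact hql
      · linarith
    linarith
  have βne0 : β ≠ 0 := ne_of_gt hβ0
  have heq : ∀ᶠ n in atTop, Real.logb β ((Tb β)^[n] x) / n - 1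
      = Real.logb β |x - conv β x n| / n := by
    filter_upwards [eventually_ge_atTop 1] with n hn
    have hid := conv_eq β βne0 x n
    have h1 : x - conv β x n = (Tb β)^[n] x / β ^ n := by linarith
    have h2 : |x - conv β x n| = (Tb β)^[n] x / β ^ n := by
      rw [h1]; exact abs_of_pos (div_pos (hpos n) (pow_pos hβ0 n))
    have hnne : ((n:ℝ)) ≠ 0 := Nat.cast_ne_zero.2 (by omega)
    rw [h2, Real.logb_div (ne_of_gt (hpos n)) (ne_of_gt (pow_pos hβ0 n)),
      Real.logb_pow, Real.logb_self_eq_one hβ, mul_one, sub_div, div_self hnne]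
  have hfinal : Tendsto (fun n : ℕ => Real.logb β ((Tb β)^[n] x) / n - 1) atTop (nhds (-1)) := by
    have := hq.sub_const 1
    rwa [zero_sub] at this
  exact hfinal.congr' heq
end
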